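/- Let K be an invertible bounded linear operator on H and let Λ = {(W_j, Λ_j, v_j)}_{j∈J} be a g-fusion frame for H with g-fusion frame operator S_Λ. Then the g-fusion frame operator of the family {(K S_Λ⁻¹ W_j, Λ_j P_{W_j} S_Λ⁻¹ K*, v_j)}_{j∈J} equals K S_Λ⁻¹ K*; that is, for all f ∈ H, ∑_{j∈J} v_j² P_{K S_Λ⁻¹ W_j} (Λ_j P_{W_j} S_Λ⁻¹ K*)* (Λ_j P_{W_j} S_Λ⁻¹ K*) P_{K S_Λ⁻¹ W_j} f = K S_Λ⁻¹ K* f. -/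

import Mathlib

noncomputable section

open ContinuousLinearMap
open scoped InnerProductSpace

set_option linter.unusedSectionVars false

/-- Orthogonal projection onto a closed subspace, as an endomorphism of `H`. -/
noncomputable def gProj {H : Type*} [NormedAddCommGroup H] [InnerProductSpace ℂ H]
    (W : Submodule ℂ H) [CompleteSpace W] : H →L[ℂ] H :=
  W.subtypeL.comp W.orthogonalProjectionOnto

section aux
variable {H : Type*} [NormedAddCommGroup H] [InnerProductSpace ℂ H] [CompleteSpace H]
  (W : Submodule ℂ H) [CompleteSpace W]

lemma gProj_adjoint : adjoint (gProj W) = gProj W :=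
  (isSelfAdjoint_starProjection W).adjoint_eq

lemma gProj_inner_left (x y : H) : ⟪gProj W x, y⟫_ℂ = ⟪x, gProj W y⟫_ℂ := by
  conv_lhs => rw [← gProj_adjoint W, adjoint_inner_left]

lemma gProj_mem {z : H} (hz : z ∈ W) : gProj W z = z :=
  Submodule.starProjection_eq_self_iff.mpr hz

lemma gProj_mem_self (y : H) : gProj W y ∈ W := (W.orthogonalProjectionOnto y).2

lemma gProj_orth {z : H} (hz : z ∈ Wᗮ) : gProj W z = 0 := by
  simp [gProj, Submodule.orthogonalProjectionOnto_apply_of_mem_orthogonal hz]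

end aux

/-- The g-fusion frame operator of `{(K S⁻¹ W j, Λ j P_{W j} S⁻¹ K*, v j)}`
equals `K S⁻¹ K*`. -/
theorem frameOp_of_inv_KgFusion
    {H : Type*} [NormedAddCommGroup H] [InnerProductSpace ℂ H] [CompleteSpace H]
    {J : Type*} [Countable J]
    {G : J → Type*} [∀ j, NormedAddCommGroup (G j)] [∀ j, InnerProductSpace ℂ (G j)]
    [∀ j, CompleteSpace (G j)]
    (W : J → Submodule ℂ H) [∀ j, CompleteSpace (W j)]
    (v : J → ℝ) (hv : ∀ j, 0 < v j)
    (Λ : ∀ j, H →L[ℂ] G j)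
    (K : H ≃L[ℂ] H) (S : H ≃L[ℂ] H)
    [∀ j, CompleteSpace ((W j).map
      (((K : H →L[ℂ] H) ∘L (S.symm : H →L[ℂ] H) : H →L[ℂ] H) : H →ₗ[ℂ] H))]
    (A B : ℝ) (hA : 0 < A) (hAB : A ≤ B)
    (hlower : ∀ f : H,
      A * ‖f‖ ^ 2 ≤ ∑' j, (v j) ^ 2 * ‖Λ j (gProj (W j) f)‖ ^ 2)
    (hupper : ∀ f : H,
      (∑' j, (v j) ^ 2 * ‖Λ j (gProj (W j) f)‖ ^ 2) ≤ B * ‖f‖ ^ 2)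
    (hS : ∀ f : H, HasSum
      (fun j => (v j) ^ 2 • gProj (W j) (adjoint (Λ j) (Λ j (gProj (W j) f)))) (S f)) :
    ∀ f : H, HasSum
      (fun j => (v j) ^ 2 •
        gProj ((W j).map
            (((K : H →L[ℂ] H) ∘L (S.symm : H →L[ℂ] H) : H →L[ℂ] H) : H →ₗ[ℂ] H))
          (adjoint ((Λ j) ∘L gProj (W j) ∘L (S.symm : H →L[ℂ] H) ∘L adjoint (K : H →L[ℂ] H))
            (((Λ j) ∘L gProj (W j) ∘L (S.symm : H →L[ℂ] H) ∘L adjoint (K : H →L[ℂ] H))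
              (gProj ((W j).map
                (((K : H →L[ℂ] H) ∘L (S.symm : H →L[ℂ] H) : H →L[ℂ] H) : H →ₗ[ℂ] H)) f))))
      (K (S.symm (adjoint (K : H →L[ℂ] H) f))) := by
  classical
  set Kc : H →L[ℂ] H := (K : H →L[ℂ] H) with hKc
  set Ssym : H →L[ℂ] H := (S.symm : H →L[ℂ] H) with hSsym
  set V : J → Submodule ℂ H := fun j => (W j).map ((Kc ∘L Ssym : H →L[ℂ] H) : H →ₗ[ℂ] H)
    with hV
  -- termwise inner-product computations
  have hterm : ∀ (a b : H) (j : J),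
      ⟪a, (v j) ^ 2 • gProj (W j) (adjoint (Λ j) (Λ j (gProj (W j) b)))⟫_ℂ
        = ((v j : ℂ)) ^ 2 * ⟪Λ j (gProj (W j) a), Λ j (gProj (W j) b)⟫_ℂ := by
    intro a b j
    rw [RCLike.real_smul_eq_coe_smul (K := ℂ), inner_smul_right, ← gProj_inner_left,
      adjoint_inner_right]
    norm_cast
  have hterm' : ∀ (a b : H) (j : J),
      ⟪(v j) ^ 2 • gProj (W j) (adjoint (Λ j) (Λ j (gProj (W j) a))), b⟫_ℂ
        = ((v j : ℂ)) ^ 2 * ⟪Λ j (gProj (W j) a), Λ j (gProj (W j) b)⟫_ℂ := by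
    intro a b j
    rw [RCLike.real_smul_eq_coe_smul (K := ℂ), inner_smul_left, gProj_inner_left,
      adjoint_inner_left, RCLike.conj_ofReal]
    norm_cast
  -- `S` is self-adjoint
  have hsym : ∀ x y : H, ⟪S x, y⟫_ℂ = ⟪x, S y⟫_ℂ := by
    intro x y
    have h1 : HasSum (fun j => ((v j : ℂ)) ^ 2 *
        ⟪Λ j (gProj (W j) x), Λ j (gProj (W j) y)⟫_ℂ) ⟪x, S y⟫_ℂ := by
      have h := (hS y).mapL (innerSL ℂ x)
      simpa only [innerSL_apply_apply, hterm x y] using h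
    have h2 : HasSum (fun j => ((v j : ℂ)) ^ 2 *
        ⟪Λ j (gProj (W j) x), Λ j (gProj (W j) y)⟫_ℂ) ⟪S x, y⟫_ℂ := by
      have h := ((hS x).mapL (innerSL ℂ y)).star
      simpa only [innerSL_apply_apply, RCLike.star_def, inner_conj_symm, hterm' x y] using h
    exact h2.unique h1
  have hsymInv : ∀ x y : H, ⟪Ssym x, y⟫_ℂ = ⟪x, Ssym y⟫_ℂ := by
    intro x y
    simp only [hSsym, ContinuousLinearEquiv.coe_coe]
    calc ⟪S.symm x, y⟫_ℂ = ⟪S.symm x, S (S.symm y)⟫_ℂ := by rw [S.apply_symm_apply]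
      _ = ⟪S (S.symm x), S.symm y⟫_ℂ := (hsym _ _).symm
      _ = ⟪x, S.symm y⟫_ℂ := by rw [S.apply_symm_apply]
  have hadjSsym : adjoint Ssym = Ssym :=
    ((eq_adjoint_iff Ssym Ssym).mpr fun x y => hsymInv x y).symm
  intro f
  set g : H := Ssym (adjoint Kc f) with hg
  -- key 1
  have key1 : ∀ j, gProj (W j) (Ssym (adjoint Kc (gProj (V j) f)))
      = gProj (W j) g := by
    intro j
    have hd : f - gProj (V j) f ∈ (V j)ᗮ := Submodule.sub_starProjection_mem_orthogonal f
    have hmem : Ssym (adjoint Kc (f - gProj (V j) f)) ∈ (W j)ᗮ := by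
      rw [Submodule.mem_orthogonal]
      intro u hu
      have hKu : Kc (Ssym u) ∈ V j := ⟨u, hu, rfl⟩
      have h0 : ⟪Ssym (adjoint Kc (f - gProj (V j) f)), u⟫_ℂ = 0 := by
        have := (Submodule.mem_orthogonal _ _).mp hd _ hKu
        rw [hsymInv, adjoint_inner_left]
        exact inner_eq_zero_symm.mp this
      exact inner_eq_zero_symm.mp h0
    have h0 : gProj (W j) (Ssym (adjoint Kc (f - gProj (V j) f))) = 0 :=
      gProj_orth (W j) hmem
    rw [map_sub (adjoint Kc), map_sub Ssym, map_sub (gProj (W j)), sub_eq_zero] at h0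
    rw [hg]
    exact h0.symm
  -- key 2
  have key2 : ∀ (j : J) (y : H), gProj (V j) (Kc (Ssym (gProj (W j) y)))
      = Kc (Ssym (gProj (W j) y)) := by
    intro j y
    exact gProj_mem (V j) ⟨gProj (W j) y, gProj_mem_self (W j) y, rfl⟩
  -- adjoint of the composite operator
  have hadjT : ∀ j, adjoint ((Λ j) ∘L gProj (W j) ∘L Ssym ∘L adjoint Kc)
      = ((Kc ∘L Ssym) ∘L gProj (W j)) ∘L adjoint (Λ j) := by
    intro j
    simp only [adjoint_comp, adjoint_adjoint, hadjSsym, gProj_adjoint]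
  -- assemble
  have hsum := (hS g).mapL (Kc ∘L Ssym)
  have hval : (Kc ∘L Ssym) (S g) = K (S.symm (adjoint Kc f)) := by
    simp only [hg, comp_apply, ContinuousLinearEquiv.coe_coe, hSsym, hKc,
      ContinuousLinearEquiv.symm_apply_apply]
  rw [hval] at hsum
  refine hsum.congr_fun ?_
  intro j
  rw [(Kc ∘L Ssym).map_smul_of_tower]
  congr 1
  rw [hadjT j]
  simp only [comp_apply]
  erw [key1 j]
  exact key2 j _
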